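/- Let K be a field equipped with a nonarchimedean multiplicative norm ‖·‖ with ‖2‖ = 1, and equip Mₙ(K) with the entrywise sup norm. Let X ∈ Mₙ(K) with 0 < ‖X‖ < 1 and with 1 − X invertible. Then ‖(1+X)·(1−X)⁻¹ − 1‖ = ‖X‖. -/

import Mathlib

/-!
With `Y = (1 + X)(1 - X)⁻¹ - 1` one has `Y (1 - X) = 2X`, i.e. `Y = 2X + YX`. For the entrywise
sup norm over an ultrametric field, `‖YX‖ ≤ ‖X‖ ‖Y‖` with `‖X‖ < 1`, so the perturbation `YX` is
too small to change the norm: `‖Y‖ = ‖2X‖ = ‖X‖`.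
-/

open Matrix

attribute [local instance] Matrix.seminormedAddCommGroup
attribute [local instance] Matrix.normSMulClass

namespace Matrix

variable {l m n R : Type*} [Fintype l] [Fintype m] [Fintype n]

instance isUltrametricDist [SeminormedAddCommGroup R] [IsUltrametricDist R] :
    IsUltrametricDist (Matrix m n R) :=
  inferInstanceAs (IsUltrametricDist (m → n → R))

theorem norm_mul_le_of_isUltrametricDist [SeminormedRing R] [IsUltrametricDist R]
    (A : Matrix l m R) (B : Matrix m n R) : ‖A * B‖ ≤ ‖A‖ * ‖B‖ := by
  have hAB : 0 ≤ ‖A‖ * ‖B‖ := by positivity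
  refine (norm_le_iff hAB).mpr fun i j => ?_
  refine IsUltrametricDist.norm_sum_le_of_forall_le_of_nonneg hAB fun k _ => ?_
  exact (norm_mul_le _ _).trans (mul_le_mul (norm_entry_le_entrywise_sup_norm A)
    (norm_entry_le_entrywise_sup_norm B) (norm_nonneg _) (norm_nonneg _))

end Matrix

theorem IsUltrametricDist.norm_eq_of_eq_add_of_norm_le_mul {E : Type*}
    [SeminormedAddCommGroup E] [IsUltrametricDist E] {y b c : E} {r : ℝ} (hr : r < 1) (hc : ‖c‖ ≤ r * ‖y‖)
    (h : y = b + c) : ‖y‖ = ‖b‖ := by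
  have hcy : ‖c‖ ≤ ‖y‖ := hc.trans (mul_le_of_le_one_left (norm_nonneg y) hr.le)
  refine le_antisymm ?_ ?_
  · have hy : ‖y‖ ≤ max ‖b‖ ‖c‖ := h ▸ norm_add_le_max b c
    rcases le_max_iff.mp hy with hyb | hyc
    · exact hyb
    · have hy0 : ‖y‖ ≤ 0 := by nlinarith [norm_nonneg y]
      exact hy0.trans (norm_nonneg b)
  · calc ‖b‖ = ‖y + -c‖ := by rw [h, add_neg_cancel_right]
      _ ≤ max ‖y‖ ‖c‖ := by simpa using norm_add_le_max y (-c)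
      _ = ‖y‖ := max_eq_left hcy

theorem cayley_preserves_depth_general {K : Type*} [NormedField K]
    (hna : IsNonarchimedean fun x : K => ‖x‖) (h2 : ‖(2 : K)‖ = 1)
    {n : ℕ} (X : Matrix (Fin n) (Fin n) K)
    (hX : ‖X‖ < 1) (h1X : IsUnit (1 - X)) :
    ‖(1 + X) * (1 - X)⁻¹ - 1‖ = ‖X‖ := by
  have : IsUltrametricDist K := .isUltrametricDist_of_isNonarchimedean_norm hna
  set Y := (1 + X) * (1 - X)⁻¹ - 1
  have hY : Y = (2 : K) • X + Y * X := by
    have hinv : (1 - X)⁻¹ * (1 - X) = 1 :=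
      nonsing_inv_mul _ ((isUnit_iff_isUnit_det _).mp h1X)
    have hYX : Y * (1 - X) = (2 : K) • X := by
      rw [sub_mul, mul_assoc, hinv, mul_one, one_mul, two_smul]
      abel
    rw [← hYX, mul_sub, mul_one, sub_add_cancel]
  calc ‖Y‖ = ‖(2 : K) • X‖ := IsUltrametricDist.norm_eq_of_eq_add_of_norm_le_mul hX
        ((norm_mul_le_of_isUltrametricDist Y X).trans_eq (mul_comm _ _)) hY
    _ = ‖X‖ := by rw [norm_smul, h2, one_mul]

/-- Over a nonarchimedean normed field with `‖2‖ = 1`, the Cayley transform preserves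
depth: if `0 < ‖X‖ < 1` (entrywise sup norm) and `1 - X` is invertible, then
`‖(1+X)(1-X)⁻¹ - 1‖ = ‖X‖`. -/
theorem cayley_preserves_depth {K : Type*} [NormedField K]
    (hna : IsNonarchimedean fun x : K => ‖x‖) (h2 : ‖(2 : K)‖ = 1)
    {n : ℕ} (X : Matrix (Fin n) (Fin n) K)
    (hX0 : 0 < ‖X‖) (hX : ‖X‖ < 1) (h1X : IsUnit (1 - X)) :
    ‖(1 + X) * (1 - X)⁻¹ - 1‖ = ‖X‖ :=
  cayley_preserves_depth_general hna h2 X hX h1X
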